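/- Let L be a Lie superalgebra and r ∈ Im(1⊗1−τ) ⊆ L⊗L an even element. Then for all x ∈ L: (1⊗1⊗1 + ξ + ξ²)·(1⊗Δ_r)·Δ_r(x) = x∗c(r), where c(r) = [r¹²,r¹³] + [r¹²,r²³] + [r¹³,r²³]. In particular, (L, [·,·], Δ_r) is a Lie superbialgebra if and only if x∗c(r)=0 for all x ∈ L. -/

import Mathlib

open TensorProduct

/-- The sign `(-1)^a` of a parity. -/
def psgn (a : ZMod 2) : ℂ := if a = 1 then -1 else 1

/-- The sign `(-1)^{ab}` for parities `a, b`. -/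
def sg (a b : ZMod 2) : ℂ := if a = 1 ∧ b = 1 then -1 else 1

/-- A Lie superalgebra structure on a complex vector space `L`. The
`ℤ₂`-grading is encoded by the involution `ω` acting by `(-1)^{[x]}` on
homogeneous `x`; the bracket is super skew-symmetric and satisfies the super
Jacobi identity on homogeneous elements. -/
structure SuperLie (L : Type*) [AddCommGroup L] [Module ℂ L] where
  br : L →ₗ[ℂ] L →ₗ[ℂ] L
  ω : L →ₗ[ℂ] L
  ω_ω : ∀ x, ω (ω x) = x
  ω_br : ∀ x y, ω (br x y) = br (ω x) (ω y)
  skew : ∀ (a b : ZMod 2) (x y : L), ω x = psgn a • x → ω y = psgn b • y →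
    br x y = -(sg a b) • br y x
  jacobi : ∀ (a b : ZMod 2) (x y z : L), ω x = psgn a • x → ω y = psgn b • y →
    br x (br y z) = br (br x y) z + sg a b • br y (br x z)

namespace SuperLie

variable {L : Type*} [AddCommGroup L] [Module ℂ L]

/-- `x` is homogeneous of parity `a`. -/
def IsHg (S : SuperLie L) (a : ZMod 2) (x : L) : Prop := S.ω x = psgn a • x

/-- Multiplication by `(-1)^{a·[·]}`. -/
noncomputable def tw (S : SuperLie L) (a : ZMod 2) : L →ₗ[ℂ] L :=
  if a = 0 then LinearMap.id else S.ω

/-- The adjoint diagonal action of a homogeneous `x` of parity `a` on `L ⊗ L`: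
`x ∗ (u ⊗ v) = [x,u] ⊗ v + (-1)^{a[u]} u ⊗ [x,v]`. -/
noncomputable def star2 (S : SuperLie L) (a : ZMod 2) (x : L) :
    L ⊗[ℂ] L →ₗ[ℂ] L ⊗[ℂ] L :=
  TensorProduct.map (S.br x) LinearMap.id + TensorProduct.map (S.tw a) (S.br x)

/-- The super-twist `τ(x ⊗ y) = (-1)^{[x][y]} y ⊗ x`. -/
noncomputable def tauT (S : SuperLie L) : L ⊗[ℂ] L →ₗ[ℂ] L ⊗[ℂ] L :=
  (TensorProduct.comm ℂ L L).toLinearMap ∘ₗ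
    (LinearMap.id - (1/2 : ℂ) •
      TensorProduct.map (LinearMap.id - S.ω) (LinearMap.id - S.ω))

end SuperLie

namespace SuperLie

variable {L : Type*} [AddCommGroup L] [Module ℂ L]

/-- The super-cyclic map `ξ = (1 ⊗ τ)(τ ⊗ 1)` on `L ⊗ L ⊗ L`. -/
noncomputable def xiT (S : SuperLie L) :
    L ⊗[ℂ] (L ⊗[ℂ] L) →ₗ[ℂ] L ⊗[ℂ] (L ⊗[ℂ] L) :=
  TensorProduct.map LinearMap.id S.tauT ∘ₗ (TensorProduct.assoc ℂ L L L).toLinearMap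
    ∘ₗ TensorProduct.map S.tauT LinearMap.id
    ∘ₗ (TensorProduct.assoc ℂ L L L).symm.toLinearMap

/-- The adjoint diagonal action of a homogeneous `x` of parity `a` on `L⊗L⊗L`. -/
noncomputable def star3 (S : SuperLie L) (a : ZMod 2) (x : L) :
    L ⊗[ℂ] (L ⊗[ℂ] L) →ₗ[ℂ] L ⊗[ℂ] (L ⊗[ℂ] L) :=
  TensorProduct.map (S.br x) LinearMap.id + TensorProduct.map (S.tw a) (S.star2 a x)

/-- The coboundary `Δ_r(x) = (-1)^{[r][x]} x ∗ r` for the even element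
`r = Σᵢ aᵢ ⊗ bᵢ` (with `aᵢ, bᵢ` homogeneous, `[aᵢ] = pa i = [bᵢ]`). -/
noncomputable def Dr (S : SuperLie L) {N : ℕ} (a b : Fin N → L)
    (pa : Fin N → ZMod 2) : L →ₗ[ℂ] L ⊗[ℂ] L :=
  ∑ i, ((TensorProduct.mk ℂ L L).flip (b i) ∘ₗ S.br.flip (a i)
    + TensorProduct.mk ℂ L L (a i) ∘ₗ S.br.flip (b i) ∘ₗ S.tw (pa i))

/-- `c(r) = [r¹²,r¹³] + [r¹²,r²³] + [r¹³,r²³]` for `r = Σᵢ aᵢ ⊗ bᵢ`. -/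
noncomputable def crE (S : SuperLie L) {N : ℕ} (a b : Fin N → L)
    (pa : Fin N → ZMod 2) : L ⊗[ℂ] (L ⊗[ℂ] L) :=
  ∑ i, ∑ j,
    (sg (pa j) (pa i) • S.br (a i) (a j) ⊗ₜ[ℂ] (b i ⊗ₜ[ℂ] b j)
      + a i ⊗ₜ[ℂ] (S.br (b i) (a j) ⊗ₜ[ℂ] b j)
      + sg (pa j) (pa i) • a i ⊗ₜ[ℂ] (a j ⊗ₜ[ℂ] S.br (b i) (b j)))

/-- `1⊗1⊗1 + ξ + ξ²` on `L ⊗ L ⊗ L`. -/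
noncomputable def oneXi (S : SuperLie L) :
    L ⊗[ℂ] (L ⊗[ℂ] L) →ₗ[ℂ] L ⊗[ℂ] (L ⊗[ℂ] L) :=
  LinearMap.id + S.xiT + S.xiT ∘ₗ S.xiT


/-!
Write `r = Σᵢ aᵢ ⊗ bᵢ`, so that `Δ_r(y) = y ∗ r`. Expanding `(1 ⊗ Δ_r) Δ_r(x)` gives a double sum over `(i, j)`
of four terms. After applying `1 + ξ + ξ²`, the super Jacobi identity and super skew-symmetry turn each
`(i, j)`-summand into the corresponding summand of `x ∗ c(r)` plus a defect. The defect splits into pieces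
`G(aᵢ, bᵢ; aⱼ, bⱼ) ± G(aᵢ, bᵢ; bⱼ, aⱼ)`, possibly with `i` and `j` exchanged, where `G` is bilinear in its last
two arguments. Each piece sums to zero because `τ r = -r`.

For the equivalence: `x ∗` commutes with `τ`, so `Δ_r` always takes values in `Im(1 ⊗ 1 − τ)`. The cocycle
condition is the Jacobi identity. So the only condition left is the co-Jacobi identity, which by the first part
says that `x ∗ c(r)` vanishes.
-/

section Signs

lemma zmod_two_eq_zero_or_one (c : ZMod 2) : c = 0 ∨ c = 1 := by
  revert c; decide

@[simp] lemma zmod_two_one_add_one : (1 : ZMod 2) + 1 = 0 := by decide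

@[simp] lemma psgn_zero : psgn 0 = 1 := by simp [psgn]

@[simp] lemma psgn_one : psgn 1 = -1 := by simp [psgn]

@[simp] lemma sg_zero_left (a : ZMod 2) : sg 0 a = 1 := by simp [sg]

@[simp] lemma sg_zero_right (a : ZMod 2) : sg a 0 = 1 := by simp [sg]

@[simp] lemma sg_one_one : sg 1 1 = -1 := by simp [sg]

lemma sg_comm (a b : ZMod 2) : sg a b = sg b a := by
  simp only [sg, and_comm]

end Signs

variable {S : SuperLie L}

lemma IsHg.br {α β : ZMod 2} {x y : L} (hx : S.IsHg α x) (hy : S.IsHg β y) :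
    S.IsHg (α + β) (S.br x y) := by
  unfold IsHg at *
  rw [S.ω_br, hx, hy, map_smul, map_smul, LinearMap.smul_apply, smul_smul]
  rcases zmod_two_eq_zero_or_one α with rfl | rfl <;>
    rcases zmod_two_eq_zero_or_one β with rfl | rfl <;> simp

lemma tw_apply_of_isHg {α β : ZMod 2} {u : L} (hu : S.IsHg β u) :
    S.tw α u = sg α β • u := by
  rcases zmod_two_eq_zero_or_one α with rfl | rfl
  · simp [tw]
  · rcases zmod_two_eq_zero_or_one β with rfl | rfl <;> simp_all [tw, IsHg]

variable (S) in
lemma exists_isHg_add (x : L) :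
    ∃ x₀ x₁ : L, S.IsHg 0 x₀ ∧ S.IsHg 1 x₁ ∧ x = x₀ + x₁ := by
  refine ⟨(2⁻¹ : ℂ) • (x + S.ω x), (2⁻¹ : ℂ) • (x - S.ω x), ?_, ?_, by module⟩ <;>
  · simp only [IsHg, map_smul, map_add, map_sub, S.ω_ω, psgn_zero, psgn_one]
    module

lemma tensor_ext_of_isHg {M : Type*} [AddCommGroup M] [Module ℂ M]
    {f g : L ⊗[ℂ] L →ₗ[ℂ] M}
    (h : ∀ (α β : ZMod 2) (u v : L), S.IsHg α u → S.IsHg β v →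
      f (u ⊗ₜ[ℂ] v) = g (u ⊗ₜ[ℂ] v)) : f = g := by
  refine TensorProduct.ext' fun u v => ?_
  obtain ⟨u₀, u₁, hu₀, hu₁, rfl⟩ := S.exists_isHg_add u
  obtain ⟨v₀, v₁, hv₀, hv₁, rfl⟩ := S.exists_isHg_add v
  simp only [TensorProduct.add_tmul, TensorProduct.tmul_add, map_add,
    h _ _ _ _ hu₀ hv₀, h _ _ _ _ hu₀ hv₁, h _ _ _ _ hu₁ hv₀, h _ _ _ _ hu₁ hv₁]

lemma tauT_tmul {α β : ZMod 2} {u v : L} (hu : S.IsHg α u) (hv : S.IsHg β v) :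
    S.tauT (u ⊗ₜ[ℂ] v) = sg α β • (v ⊗ₜ[ℂ] u) := by
  unfold IsHg at hu hv
  have hKoszul : (u - psgn α • u) ⊗ₜ[ℂ] (v - psgn β • v)
      = ((1 - psgn α) * (1 - psgn β)) • (u ⊗ₜ[ℂ] v) := by
    simp only [TensorProduct.sub_tmul, TensorProduct.tmul_sub, TensorProduct.smul_tmul,
      TensorProduct.tmul_smul]
    module
  simp only [tauT, LinearMap.comp_apply, LinearMap.sub_apply, LinearMap.smul_apply,
    TensorProduct.map_tmul, LinearMap.id_apply, hu, hv, hKoszul, map_sub, map_smul,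
    LinearEquiv.coe_coe, TensorProduct.comm_tmul]
  rcases zmod_two_eq_zero_or_one α with rfl | rfl <;>
    rcases zmod_two_eq_zero_or_one β with rfl | rfl <;> norm_num [sg]
  module

lemma tauT_tauT (t : L ⊗[ℂ] L) : S.tauT (S.tauT t) = t := by
  suffices S.tauT ∘ₗ S.tauT = LinearMap.id from LinearMap.congr_fun this t
  refine tensor_ext_of_isHg (S := S) fun α β u v hu hv => ?_
  rw [LinearMap.comp_apply, tauT_tmul hu hv, map_smul, tauT_tmul hv hu, smul_smul, sg_comm,
    LinearMap.id_apply]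
  rcases zmod_two_eq_zero_or_one α with rfl | rfl <;>
    rcases zmod_two_eq_zero_or_one β with rfl | rfl <;> norm_num

lemma tauT_eq_neg_of_mem_range {t : L ⊗[ℂ] L}
    (ht : t ∈ LinearMap.range (LinearMap.id - S.tauT)) : S.tauT t = -t := by
  obtain ⟨s, rfl⟩ := ht
  simp only [LinearMap.sub_apply, LinearMap.id_apply, map_sub, tauT_tauT, neg_sub]


lemma star2_tmul {α β : ZMod 2} (x : L) {u : L} (v : L) (hu : S.IsHg β u) :
    S.star2 α x (u ⊗ₜ[ℂ] v) = S.br x u ⊗ₜ[ℂ] v + sg α β • u ⊗ₜ[ℂ] S.br x v := by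
  simp [star2, tw_apply_of_isHg hu, TensorProduct.smul_tmul']

lemma star3_tmul {α β γ : ZMod 2} (x : L) {u v : L} (w : L)
    (hu : S.IsHg β u) (hv : S.IsHg γ v) :
    S.star3 α x (u ⊗ₜ[ℂ] (v ⊗ₜ[ℂ] w))
      = S.br x u ⊗ₜ[ℂ] (v ⊗ₜ[ℂ] w) + sg α β • u ⊗ₜ[ℂ] (S.br x v ⊗ₜ[ℂ] w)
        + (sg α β * sg α γ) • u ⊗ₜ[ℂ] (v ⊗ₜ[ℂ] S.br x w) := by
  simp only [star3, LinearMap.add_apply, TensorProduct.map_tmul, LinearMap.id_apply,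
    star2_tmul x w hv, tw_apply_of_isHg hu, TensorProduct.tmul_add, ← TensorProduct.smul_tmul',
    TensorProduct.tmul_smul, smul_smul]
  module

lemma xiT_tmul {α β γ : ZMod 2} {u v w : L}
    (hu : S.IsHg α u) (hv : S.IsHg β v) (hw : S.IsHg γ w) :
    S.xiT (u ⊗ₜ[ℂ] (v ⊗ₜ[ℂ] w)) = (sg α β * sg α γ) • v ⊗ₜ[ℂ] (w ⊗ₜ[ℂ] u) := by
  simp only [xiT, LinearMap.comp_apply, LinearEquiv.coe_coe, TensorProduct.assoc_symm_tmul,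
    TensorProduct.map_tmul, LinearMap.id_apply, tauT_tmul hu hv, ← TensorProduct.smul_tmul',
    map_smul, TensorProduct.assoc_tmul, tauT_tmul hu hw, TensorProduct.tmul_smul, smul_smul]

section Coboundary

variable {N : ℕ} {a b : Fin N → L} {pa : Fin N → ZMod 2}

lemma Dr_apply {σ : ZMod 2} {y : L} (hy : S.IsHg σ y) :
    S.Dr a b pa y
      = ∑ i, (S.br y (a i) ⊗ₜ[ℂ] b i + sg (pa i) σ • a i ⊗ₜ[ℂ] S.br y (b i)) := by
  simp only [Dr, LinearMap.sum_apply, LinearMap.add_apply, LinearMap.comp_apply,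
    LinearMap.flip_apply, TensorProduct.mk_apply, tw_apply_of_isHg hy, map_smul]

lemma Dr_eq_star2 (ha : ∀ i, S.IsHg (pa i) (a i)) {σ : ZMod 2} {x : L} (hx : S.IsHg σ x) :
    S.Dr a b pa x = S.star2 σ x (∑ i, a i ⊗ₜ[ℂ] b i) := by
  simp only [Dr_apply hx, map_sum, star2_tmul x _ (ha _), sg_comm σ]

lemma tauT_star2 {σ : ZMod 2} {x : L} (hx : S.IsHg σ x) (t : L ⊗[ℂ] L) :
    S.tauT (S.star2 σ x t) = S.star2 σ x (S.tauT t) := by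
  suffices S.tauT ∘ₗ S.star2 σ x = S.star2 σ x ∘ₗ S.tauT from LinearMap.congr_fun this t
  refine tensor_ext_of_isHg (S := S) fun α β u v hu hv => ?_
  simp only [LinearMap.comp_apply, star2_tmul x v hu, tauT_tmul hu hv, map_add, map_smul,
    tauT_tmul (hx.br hu) hv, tauT_tmul hu (hx.br hv), star2_tmul x u hv, smul_add, smul_smul]
  rcases zmod_two_eq_zero_or_one σ with rfl | rfl <;>
    rcases zmod_two_eq_zero_or_one α with rfl | rfl <;>
    rcases zmod_two_eq_zero_or_one β with rfl | rfl <;>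
    simp only [zmod_two_one_add_one, zero_add, add_zero, sg_zero_left, sg_zero_right,
      sg_one_one] <;>
    module

lemma Dr_mem_range (ha : ∀ i, S.IsHg (pa i) (a i))
    (hr : (∑ i, a i ⊗ₜ[ℂ] b i) ∈ LinearMap.range (LinearMap.id - S.tauT)) (x : L) :
    S.Dr a b pa x ∈ LinearMap.range (LinearMap.id - S.tauT) := by
  obtain ⟨t, ht⟩ := hr
  have hom : ∀ (σ : ZMod 2) (y : L), S.IsHg σ y →
      S.Dr a b pa y ∈ LinearMap.range (LinearMap.id - S.tauT) := fun σ y hy =>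
    ⟨S.star2 σ y t, by
      rw [Dr_eq_star2 ha hy, ← ht]
      simp only [LinearMap.sub_apply, LinearMap.id_apply, map_sub, tauT_star2 hy]⟩
  obtain ⟨x₀, x₁, h₀, h₁, rfl⟩ := S.exists_isHg_add x
  rw [map_add]
  exact add_mem (hom 0 x₀ h₀) (hom 1 x₁ h₁)

lemma Dr_br (ha : ∀ i, S.IsHg (pa i) (a i)) {σ τ : ZMod 2} {x y : L}
    (hx : S.IsHg σ x) (hy : S.IsHg τ y) :
    S.Dr a b pa (S.br x y)
      = S.star2 σ x (S.Dr a b pa y) - sg σ τ • S.star2 τ y (S.Dr a b pa x) := by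
  have jacobi : ∀ u, S.br (S.br x y) u = S.br x (S.br y u) - sg σ τ • S.br y (S.br x u) :=
    fun u => by rw [S.jacobi σ τ x y u hx hy, add_sub_cancel_right]
  simp only [Dr_apply (hx.br hy), Dr_apply hx, Dr_apply hy, map_sum, Finset.smul_sum,
    ← Finset.sum_sub_distrib, map_add, map_smul, star2_tmul _ _ (ha _),
    star2_tmul _ _ (hx.br (ha _)), star2_tmul _ _ (hy.br (ha _)), jacobi]
  refine Finset.sum_congr rfl fun i _ => ?_
  simp only [TensorProduct.sub_tmul, TensorProduct.tmul_sub, smul_add, smul_sub,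
    ← TensorProduct.smul_tmul', TensorProduct.tmul_smul, smul_smul]
  rcases zmod_two_eq_zero_or_one σ with rfl | rfl <;>
    rcases zmod_two_eq_zero_or_one τ with rfl | rfl <;>
    rcases zmod_two_eq_zero_or_one (pa i) with h | h <;>
    simp only [h, zmod_two_one_add_one, zero_add, add_zero, sg_zero_left, sg_zero_right,
      sg_one_one] <;>
    module

end Coboundary

section Skew

variable {N : ℕ} {a b : Fin N → L} {pa : Fin N → ZMod 2}
  {M : Type*} [AddCommGroup M] [Module ℂ M]

variable (S) in
noncomputable def parityScale (c : ZMod 2 → ℂ) : L →ₗ[ℂ] L :=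
  ((c 0 + c 1) / 2) • LinearMap.id + ((c 0 - c 1) / 2) • S.ω

lemma parityScale_apply {α : ZMod 2} {u : L} (hu : S.IsHg α u) (c : ZMod 2 → ℂ) :
    S.parityScale c u = c α • u := by
  unfold IsHg at hu
  rcases zmod_two_eq_zero_or_one α with rfl | rfl <;>
    simp only [parityScale, LinearMap.add_apply, LinearMap.smul_apply, LinearMap.id_apply, hu,
      psgn_zero, psgn_one, smul_smul] <;>
    module

/-- Both sums are values of one linear map, at `r` and at `τ r`. -/
lemma sum_smul_add_swap_eq_zero (ha : ∀ i, S.IsHg (pa i) (a i))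
    (hb : ∀ i, S.IsHg (pa i) (b i))
    (hsk : S.tauT (∑ i, a i ⊗ₜ[ℂ] b i) = -∑ i, a i ⊗ₜ[ℂ] b i)
    (c : ZMod 2 → ℂ) (G : L →ₗ[ℂ] L →ₗ[ℂ] M) :
    ∑ j, (c (pa j) • G (a j) (b j) + (c (pa j) * sg (pa j) (pa j)) • G (b j) (a j)) = 0 := by
  set Φ := TensorProduct.lift (G.compl₂ (S.parityScale c))
  have h₁ : ∀ j, c (pa j) • G (a j) (b j) = Φ (a j ⊗ₜ[ℂ] b j) := fun j => by
    simp [Φ, parityScale_apply (hb j)]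
  have h₂ : ∀ j, (c (pa j) * sg (pa j) (pa j)) • G (b j) (a j)
      = Φ (S.tauT (a j ⊗ₜ[ℂ] b j)) := fun j => by
    simp [Φ, tauT_tmul (ha j) (hb j), parityScale_apply (ha j), smul_smul, mul_comm]
  simp only [h₁, h₂, Finset.sum_add_distrib, ← map_sum, hsk, map_neg, add_neg_cancel]

def innerPiece (c : ZMod 2 → ZMod 2 → ℂ) (g : L → L → L → L → M) (p q : ZMod 2)
    (u v w z : L) : M :=
  c p q • g u v w z + (c p q * sg q q) • g u v z w

def crossPiece (c : ZMod 2 → ZMod 2 → ℂ) (g : L → L → L → L → M) (p q : ZMod 2)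
    (u v w z : L) : M :=
  c q p • g w z u v + (c p q * sg q q) • g u v z w

lemma sum_sum_innerPiece_eq_zero (ha : ∀ i, S.IsHg (pa i) (a i))
    (hb : ∀ i, S.IsHg (pa i) (b i))
    (hsk : S.tauT (∑ i, a i ⊗ₜ[ℂ] b i) = -∑ i, a i ⊗ₜ[ℂ] b i)
    (c : ZMod 2 → ZMod 2 → ℂ) {g : L → L → L → L → M}
    (hg : ∀ u v, (∀ t, IsLinearMap ℂ (g u v · t)) ∧ ∀ s, IsLinearMap ℂ (g u v s)) :
    ∑ i, ∑ j, innerPiece c g (pa i) (pa j) (a i) (b i) (a j) (b j) = 0 :=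
  Finset.sum_eq_zero fun i _ => by
    obtain ⟨hl, hr⟩ := hg (a i) (b i)
    exact sum_smul_add_swap_eq_zero ha hb hsk (c (pa i)) <| LinearMap.mk₂ ℂ _
      (fun s₁ s₂ t => (hl t).map_add s₁ s₂) (fun r s t => (hl t).map_smul r s)
      (fun s t₁ t₂ => (hr s).map_add t₁ t₂) (fun r s t => (hr s).map_smul r t)

lemma sum_sum_innerPiece_swap_eq_zero (ha : ∀ i, S.IsHg (pa i) (a i))
    (hb : ∀ i, S.IsHg (pa i) (b i))
    (hsk : S.tauT (∑ i, a i ⊗ₜ[ℂ] b i) = -∑ i, a i ⊗ₜ[ℂ] b i)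
    (c : ZMod 2 → ZMod 2 → ℂ) {g : L → L → L → L → M}
    (hg : ∀ u v, (∀ t, IsLinearMap ℂ (g u v · t)) ∧ ∀ s, IsLinearMap ℂ (g u v s)) :
    ∑ i, ∑ j, innerPiece c g (pa j) (pa i) (a j) (b j) (a i) (b i) = 0 :=
  Finset.sum_comm.trans (sum_sum_innerPiece_eq_zero ha hb hsk c hg)

lemma sum_sum_crossPiece_eq_zero (ha : ∀ i, S.IsHg (pa i) (a i))
    (hb : ∀ i, S.IsHg (pa i) (b i))
    (hsk : S.tauT (∑ i, a i ⊗ₜ[ℂ] b i) = -∑ i, a i ⊗ₜ[ℂ] b i)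
    (c : ZMod 2 → ZMod 2 → ℂ) {g : L → L → L → L → M}
    (hg : ∀ u v, (∀ t, IsLinearMap ℂ (g u v · t)) ∧ ∀ s, IsLinearMap ℂ (g u v s)) :
    ∑ i, ∑ j, crossPiece c g (pa i) (pa j) (a i) (b i) (a j) (b j) = 0 := by
  rw [← sum_sum_innerPiece_eq_zero ha hb hsk c hg]
  simp only [crossPiece, innerPiece, Finset.sum_add_distrib]
  congr 1
  exact Finset.sum_comm

end Skew

variable (S) in
noncomputable def iterDrTerm (σ p q : ZMod 2) (x u v w z : L) : L ⊗[ℂ] (L ⊗[ℂ] L) :=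
  S.br x u ⊗ₜ[ℂ] (S.br v w ⊗ₜ[ℂ] z)
    + sg q p • S.br x u ⊗ₜ[ℂ] (w ⊗ₜ[ℂ] S.br v z)
    + sg p σ • u ⊗ₜ[ℂ] (S.br (S.br x v) w ⊗ₜ[ℂ] z)
    + (sg p σ * sg q (σ + p)) • u ⊗ₜ[ℂ] (w ⊗ₜ[ℂ] S.br (S.br x v) z)

variable (S) in
noncomputable def star3CrETerm (σ p q : ZMod 2) (x u v w z : L) : L ⊗[ℂ] (L ⊗[ℂ] L) :=
  sg q p • S.br x (S.br u w) ⊗ₜ[ℂ] (v ⊗ₜ[ℂ] z)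
    + (sg q p * sg σ (p + q)) • S.br u w ⊗ₜ[ℂ] (S.br x v ⊗ₜ[ℂ] z)
    + (sg q p * sg σ (p + q) * sg σ p) • S.br u w ⊗ₜ[ℂ] (v ⊗ₜ[ℂ] S.br x z)
    + S.br x u ⊗ₜ[ℂ] (S.br v w ⊗ₜ[ℂ] z)
    + sg σ p • u ⊗ₜ[ℂ] (S.br x (S.br v w) ⊗ₜ[ℂ] z)
    + (sg σ p * sg σ (p + q)) • u ⊗ₜ[ℂ] (S.br v w ⊗ₜ[ℂ] S.br x z)
    + sg q p • S.br x u ⊗ₜ[ℂ] (w ⊗ₜ[ℂ] S.br v z)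
    + (sg q p * sg σ p) • u ⊗ₜ[ℂ] (S.br x w ⊗ₜ[ℂ] S.br v z)
    + (sg q p * sg σ p * sg σ q) • u ⊗ₜ[ℂ] (w ⊗ₜ[ℂ] S.br x (S.br v z))

variable (S) in
noncomputable def mybeDefect (σ p q : ZMod 2) (x u v w z : L) : L ⊗[ℂ] (L ⊗[ℂ] L) :=
  crossPiece (fun α β => -(sg β β * sg σ β * sg α β))
      (fun y₁ y₂ s t => S.br y₁ t ⊗ₜ[ℂ] (y₂ ⊗ₜ[ℂ] S.br x s)) p q u v w z
    + crossPiece (fun α β => -(sg σ β * sg β α))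
      (fun y₁ y₂ s t => s ⊗ₜ[ℂ] (S.br x y₁ ⊗ₜ[ℂ] S.br t y₂)) p q u v w z
    + crossPiece (fun α β => sg β β * sg σ β * sg α β)
      (fun y₁ y₂ s t => y₁ ⊗ₜ[ℂ] (S.br t y₂ ⊗ₜ[ℂ] S.br x s)) p q u v w z
    + crossPiece (fun _ β => sg β β)
      (fun y₁ y₂ s t => S.br (S.br x t) y₁ ⊗ₜ[ℂ] (y₂ ⊗ₜ[ℂ] s)) p q u v w z
    + crossPiece (fun α β => sg σ β * sg σ α)
      (fun y₁ y₂ s t => s ⊗ₜ[ℂ] (y₁ ⊗ₜ[ℂ] S.br (S.br x y₂) t)) p q u v w z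
    + crossPiece (fun α β => sg β β * sg σ α * sg β α)
      (fun y₁ y₂ s t => y₁ ⊗ₜ[ℂ] (S.br (S.br x t) y₂ ⊗ₜ[ℂ] s)) p q u v w z
    -- Two pairs of terms are exchanged by swapping both `u, v` and `w, z`; each pair is split
    -- into two inner pieces by adding and subtracting a common middle term.
    + innerPiece (fun α β => sg α α * sg β β * sg σ α * sg σ β * sg α β)
      (fun y₁ y₂ s t => S.br y₂ t ⊗ₜ[ℂ] (S.br x y₁ ⊗ₜ[ℂ] s)) p q u v w z
    + innerPiece (fun α β => -(sg β β * sg σ β * sg σ α * sg β α))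
      (fun y₁ y₂ s t => S.br t y₁ ⊗ₜ[ℂ] (S.br x s ⊗ₜ[ℂ] y₂)) q p w z u v
    + innerPiece (fun α β => sg α α * sg β β * sg α β)
      (fun y₁ y₂ s t => S.br (S.br x y₂) t ⊗ₜ[ℂ] (y₁ ⊗ₜ[ℂ] s)) p q u v w z
    + innerPiece (fun α β => -(sg β β * sg β α))
      (fun y₁ y₂ s t => S.br (S.br x t) y₁ ⊗ₜ[ℂ] (s ⊗ₜ[ℂ] y₂)) q p w z u v

lemma oneXi_iterDrTerm {σ p q : ZMod 2} {x u v w z : L}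
    (hx : S.IsHg σ x) (hu : S.IsHg p u) (hv : S.IsHg p v)
    (hw : S.IsHg q w) (hz : S.IsHg q z) :
    S.oneXi (S.iterDrTerm σ p q x u v w z)
      = S.star3CrETerm σ p q x u v w z + S.mybeDefect σ p q x u v w z := by
  have hxu := hx.br hu
  have hvw := hv.br hw
  have hvz := hv.br hz
  have hxvw := (hx.br hv).br hw
  have hxvz := (hx.br hv).br hz
  simp only [oneXi, iterDrTerm, LinearMap.add_apply, LinearMap.id_apply, LinearMap.comp_apply,
    map_add, map_smul, xiT_tmul hxu hvw hz, xiT_tmul hxu hw hvz, xiT_tmul hu hxvw hz,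
    xiT_tmul hu hw hxvz, xiT_tmul hvw hz hxu, xiT_tmul hw hvz hxu, xiT_tmul hxvw hz hu,
    xiT_tmul hw hxvz hu, star3CrETerm, mybeDefect, crossPiece, innerPiece, smul_smul]
  -- Expand the brackets `[x, [·, ·]]` and bring all other brackets into one order.
  rw [S.jacobi σ p x u w hx hu, S.jacobi σ p x v w hx hv, S.jacobi σ p x v z hx hv,
    S.skew q p w v hw hv, S.skew p (σ + q) u (S.br x w) hu (hx.br hw),
    S.skew p (σ + q) v (S.br x w) hv (hx.br hw), S.skew p (σ + q) v (S.br x z) hv (hx.br hz)]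
  simp only [TensorProduct.add_tmul, TensorProduct.tmul_add, TensorProduct.neg_tmul,
    TensorProduct.tmul_neg, ← TensorProduct.smul_tmul', TensorProduct.tmul_smul,
    smul_smul, smul_add, smul_neg, neg_smul]
  rcases zmod_two_eq_zero_or_one σ with rfl | rfl <;>
    rcases zmod_two_eq_zero_or_one p with rfl | rfl <;>
    rcases zmod_two_eq_zero_or_one q with rfl | rfl <;>
    simp only [zmod_two_one_add_one, zero_add, add_zero, sg_zero_left, sg_zero_right,
      sg_one_one] <;>
    module

section Expansion

variable {N : ℕ} {a b : Fin N → L} {pa : Fin N → ZMod 2}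

lemma map_id_Dr_Dr_apply (hb : ∀ i, S.IsHg (pa i) (b i)) {σ : ZMod 2} {x : L}
    (hx : S.IsHg σ x) :
    TensorProduct.map LinearMap.id (S.Dr a b pa) (S.Dr a b pa x)
      = ∑ i, ∑ j, S.iterDrTerm σ (pa i) (pa j) x (a i) (b i) (a j) (b j) := by
  simp only [Dr_apply hx, map_sum, map_add, map_smul, TensorProduct.map_tmul,
    LinearMap.id_apply, Dr_apply (hb _), Dr_apply (hx.br (hb _)), TensorProduct.tmul_sum,
    Finset.smul_sum, ← Finset.sum_add_distrib]
  refine Finset.sum_congr rfl fun i _ => Finset.sum_congr rfl fun j _ => ?_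
  simp only [iterDrTerm, TensorProduct.tmul_add, TensorProduct.tmul_smul, smul_add, smul_smul]
  module

lemma star3_crE (ha : ∀ i, S.IsHg (pa i) (a i)) (hb : ∀ i, S.IsHg (pa i) (b i))
    {σ : ZMod 2} (x : L) :
    S.star3 σ x (S.crE a b pa)
      = ∑ i, ∑ j, S.star3CrETerm σ (pa i) (pa j) x (a i) (b i) (a j) (b j) := by
  simp only [crE, map_sum, map_add, map_smul, star3_tmul x _ ((ha _).br (ha _)) (hb _),
    star3_tmul x _ (ha _) ((hb _).br (ha _)), star3_tmul x _ (ha _) (ha _)]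
  refine Finset.sum_congr rfl fun i _ => Finset.sum_congr rfl fun j _ => ?_
  simp only [star3CrETerm, smul_add, smul_smul]
  module

lemma sum_sum_mybeDefect_eq_zero (ha : ∀ i, S.IsHg (pa i) (a i))
    (hb : ∀ i, S.IsHg (pa i) (b i))
    (hsk : S.tauT (∑ i, a i ⊗ₜ[ℂ] b i) = -∑ i, a i ⊗ₜ[ℂ] b i) (σ : ZMod 2) (x : L) :
    ∑ i, ∑ j, S.mybeDefect σ (pa i) (pa j) x (a i) (b i) (a j) (b j) = 0 := by
  simp only [mybeDefect, Finset.sum_add_distrib]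
  rw [sum_sum_crossPiece_eq_zero ha hb hsk, sum_sum_crossPiece_eq_zero ha hb hsk,
    sum_sum_crossPiece_eq_zero ha hb hsk, sum_sum_crossPiece_eq_zero ha hb hsk,
    sum_sum_crossPiece_eq_zero ha hb hsk, sum_sum_crossPiece_eq_zero ha hb hsk,
    sum_sum_innerPiece_eq_zero ha hb hsk, sum_sum_innerPiece_swap_eq_zero ha hb hsk,
    sum_sum_innerPiece_eq_zero ha hb hsk, sum_sum_innerPiece_swap_eq_zero ha hb hsk]
  · simp only [add_zero]
  -- the side goals: each piece is bilinear in its last two arguments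
  all_goals
    refine fun u v => ⟨fun t => ⟨?_, ?_⟩, fun s => ⟨?_, ?_⟩⟩ <;> intros <;>
      simp only [map_add, map_smul, LinearMap.add_apply, LinearMap.smul_apply,
        TensorProduct.add_tmul, TensorProduct.tmul_add, ← TensorProduct.smul_tmul',
        TensorProduct.tmul_smul]

lemma oneXi_map_id_Dr_Dr (ha : ∀ i, S.IsHg (pa i) (a i)) (hb : ∀ i, S.IsHg (pa i) (b i))
    (hr : (∑ i, a i ⊗ₜ[ℂ] b i) ∈ LinearMap.range (LinearMap.id - S.tauT))
    {σ : ZMod 2} {x : L} (hx : S.IsHg σ x) :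
    S.oneXi (TensorProduct.map LinearMap.id (S.Dr a b pa) (S.Dr a b pa x))
      = S.star3 σ x (S.crE a b pa) := by
  rw [map_id_Dr_Dr_apply hb hx, star3_crE ha hb]
  simp only [map_sum, oneXi_iterDrTerm hx (ha _) (hb _) (ha _) (hb _), Finset.sum_add_distrib,
    sum_sum_mybeDefect_eq_zero ha hb (tauT_eq_neg_of_mem_range hr), add_zero]

end Expansion

/-- for an even `r = Σᵢ aᵢ ⊗ bᵢ ∈ Im(1⊗1−τ)`,
`(1⊗1⊗1 + ξ + ξ²)·(1⊗Δ_r)·Δ_r(x) = x ∗ c(r)` for all (homogeneous) `x ∈ L`;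
in particular, `(L, [·,·], Δ_r)` is a Lie superbialgebra iff `r` satisfies the
modified Yang–Baxter equation `x ∗ c(r) = 0` for all `x`. -/
theorem coboundary_eq_MYBE (S : SuperLie L) {N : ℕ} (a b : Fin N → L)
    (pa : Fin N → ZMod 2)
    (ha : ∀ i, S.IsHg (pa i) (a i)) (hb : ∀ i, S.IsHg (pa i) (b i))
    (hr : (∑ i, a i ⊗ₜ[ℂ] b i) ∈ LinearMap.range (LinearMap.id - S.tauT)) :
    (∀ (σ : ZMod 2) (x : L), S.IsHg σ x →
      S.oneXi (TensorProduct.map LinearMap.id (S.Dr a b pa) (S.Dr a b pa x))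
        = S.star3 σ x (S.crE a b pa)) ∧
    (((∀ x : L, S.Dr a b pa x ∈ LinearMap.range (LinearMap.id - S.tauT)) ∧
      (∀ x : L, S.oneXi
          (TensorProduct.map LinearMap.id (S.Dr a b pa) (S.Dr a b pa x)) = 0) ∧
      (∀ (σ τ : ZMod 2) (x y : L), S.IsHg σ x → S.IsHg τ y →
        S.Dr a b pa (S.br x y)
          = S.star2 σ x (S.Dr a b pa y) - sg σ τ • S.star2 τ y (S.Dr a b pa x)))
      ↔ (∀ (σ : ZMod 2) (x : L), S.IsHg σ x → S.star3 σ x (S.crE a b pa) = 0)) := by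
  refine ⟨fun σ x hx => oneXi_map_id_Dr_Dr ha hb hr hx, fun ⟨_, hcoJacobi, _⟩ σ x hx => ?_,
    fun hMYBE => ⟨Dr_mem_range ha hr, fun x => ?_, fun σ τ x y hx hy => Dr_br ha hx hy⟩⟩
  · rw [← oneXi_map_id_Dr_Dr ha hb hr hx]
    exact hcoJacobi x
  · obtain ⟨x₀, x₁, h₀, h₁, rfl⟩ := S.exists_isHg_add x
    simp only [map_add, oneXi_map_id_Dr_Dr ha hb hr h₀, oneXi_map_id_Dr_Dr ha hb hr h₁,
      hMYBE 0 x₀ h₀, hMYBE 1 x₁ h₁, add_zero]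

end SuperLie
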